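/- (Consequences of epi-convergence, minimizer part) Let f, f^ν : ℝ^n → ℝ ∪ {±∞} and suppose the epigraphs epi f^ν converge to epi f in the Painlevé–Kuratowski sense (equivalently, f^ν epi-converges to f). Suppose inf f < ∞, ε^ν → 0, ε^ν ≥ 0, and x^ν is an ε^ν-minimizer of f^ν for each ν. If x^ν → x along a subsequence N ⊆ ℕ, then x minimizes f and f^ν(x^ν) → inf f along N. -/

import Mathlib

/-!
Along the subsequence, the values `fν ν (xs ν)` are bounded below in the limit by `f x`, by the
liminf half of epi-convergence, and above by `limsup (inf fν) + lim ε ≤ inf f`, since every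
recovery sequence of the limsup half bounds `inf fν` from above. As `inf f ≤ f x`, all these
quantities coincide.
-/

open Filter Topology

lemma StrictMono.exists_tendsto_comp_eq {X : Type*} [TopologicalSpace X] {φ : ℕ → ℕ}
    (hφ : StrictMono φ) {u : ℕ → X} {x : X} (hu : Tendsto (u ∘ φ) atTop (𝓝 x)) :
    ∃ v : ℕ → X, Tendsto v atTop (𝓝 x) ∧ ∀ k, v (φ k) = u (φ k) := by
  classical
  refine ⟨(Set.range φ).piecewise u fun _ => x, ?_, ?_⟩
  · refine tendsto_nhds.2 fun U hU hxU => ?_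
    obtain ⟨k₀, hk₀⟩ := eventually_atTop.1 (tendsto_nhds.1 hu U hU hxU)
    refine eventually_atTop.2 ⟨φ k₀, fun ν hν => ?_⟩
    by_cases hν' : ν ∈ Set.range φ
    · obtain ⟨k, rfl⟩ := hν'
      rw [Set.piecewise_eq_of_mem _ _ _ (Set.mem_range_self k)]
      exact hk₀ k (hφ.le_iff_le.1 hν)
    · rwa [Set.piecewise_eq_of_notMem _ _ _ hν']
  · exact fun k => Set.piecewise_eq_of_mem _ _ _ (Set.mem_range_self k)

lemma le_liminf_comp_of_le_liminf {X α : Type*} [TopologicalSpace X] [CompleteLattice α]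
    {g : ℕ → X → α} {x : X} {a : α}
    (hg : ∀ v : ℕ → X, Tendsto v atTop (𝓝 x) → a ≤ liminf (fun ν => g ν (v ν)) atTop)
    {φ : ℕ → ℕ} (hφ : StrictMono φ) {u : ℕ → X} (hu : Tendsto (u ∘ φ) atTop (𝓝 x)) :
    a ≤ liminf (fun k => g (φ k) (u (φ k))) atTop := by
  obtain ⟨v, hv, hvu⟩ := hφ.exists_tendsto_comp_eq hu
  calc a ≤ liminf (fun ν => g ν (v ν)) atTop := hg v hv
    _ ≤ liminf ((fun ν => g ν (v ν)) ∘ φ) atTop := hφ.tendsto_atTop.liminf_le_liminf_comp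
    _ = liminf (fun k => g (φ k) (u (φ k))) atTop := by
      simp only [Function.comp_def, hvu]

lemma limsup_iInf_le_iInf {ι X α : Type*} [CompleteLattice α] {F : Filter ι}
    {g : ι → X → α} {f : X → α} (hg : ∀ x, ∃ v : ι → X, limsup (fun i => g i (v i)) F ≤ f x) :
    limsup (fun i => ⨅ y, g i y) F ≤ ⨅ x, f x :=
  le_iInf fun x =>
    let ⟨_, hv⟩ := hg x
    (limsup_le_limsup (Eventually.of_forall fun _ => iInf_le _ _)).trans hv

lemma EReal.limsup_le_limsup_of_le_add_of_tendsto_zero {ι : Type*} {F : Filter ι} [F.NeBot]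
    {u v : ι → EReal} {ε : ι → ℝ} (h : ∀ i, u i ≤ v i + ε i) (hε : Tendsto ε F (𝓝 0)) :
    limsup u F ≤ limsup v F := by
  have hε' : limsup (fun i => (ε i : EReal)) F = 0 :=
    (continuous_coe_real_ereal.tendsto 0 |>.comp hε).limsup_eq
  calc limsup u F ≤ limsup (v + fun i => (ε i : EReal)) F :=
        limsup_le_limsup (Eventually.of_forall h)
    _ ≤ limsup v F + limsup (fun i => (ε i : EReal)) F :=
        EReal.limsup_add_le (Or.inr (by simp [hε'])) (Or.inr (by simp [hε']))
    _ = limsup v F := by rw [hε', add_zero]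

theorem stmt13_general {n : ℕ} (f : (Fin n → ℝ) → EReal) (fν : ℕ → (Fin n → ℝ) → EReal)
    (hliminf : ∀ (xs : ℕ → (Fin n → ℝ)) (x : Fin n → ℝ),
      Tendsto xs atTop (𝓝 x) → f x ≤ liminf (fun ν => fν ν (xs ν)) atTop)
    (hlimsup : ∀ x : Fin n → ℝ, ∃ xs : ℕ → (Fin n → ℝ),
      Tendsto xs atTop (𝓝 x) ∧ limsup (fun ν => fν ν (xs ν)) atTop ≤ f x)
    (ε : ℕ → ℝ) (hε : Tendsto ε atTop (𝓝 0))
    (xs : ℕ → (Fin n → ℝ))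
    (hmin : ∀ ν, fν ν (xs ν) < ⊤ ∧ fν ν (xs ν) ≤ (⨅ x, fν ν x) + ((ε ν : ℝ) : EReal))
    (N : ℕ → ℕ) (hN : StrictMono N) (x : Fin n → ℝ)
    (hconv : Tendsto (fun k => xs (N k)) atTop (𝓝 x)) :
    (∀ x' : Fin n → ℝ, f x ≤ f x') ∧
    Tendsto (fun k => fν (N k) (xs (N k))) atTop (𝓝 (⨅ x', f x')) := by
  have hlower : f x ≤ liminf (fun k => fν (N k) (xs (N k))) atTop :=
    le_liminf_comp_of_le_liminf (hliminf · x) hN hconv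
  have hupper : limsup (fun k => fν (N k) (xs (N k))) atTop ≤ ⨅ x', f x' :=
    calc limsup (fun k => fν (N k) (xs (N k))) atTop
        ≤ limsup ((fun ν => ⨅ y, fν ν y) ∘ N) atTop :=
          EReal.limsup_le_limsup_of_le_add_of_tendsto_zero (fun k => (hmin (N k)).2)
            (hε.comp hN.tendsto_atTop)
      _ ≤ limsup (fun ν => ⨅ y, fν ν y) atTop := hN.tendsto_atTop.limsup_comp_le_limsup
      _ ≤ ⨅ x', f x' :=
          limsup_iInf_le_iInf fun x' => (hlimsup x').imp fun _ => And.right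
  have hfx : f x = ⨅ x', f x' :=
    le_antisymm (hlower.trans (le_trans liminf_le_limsup hupper)) (iInf_le f x)
  exact ⟨fun x' => hfx ▸ iInf_le f x', tendsto_of_le_liminf_of_limsup_le (hfx ▸ hlower) hupper⟩

/-- Consequences of epi-convergence (minimizer part): if `fν` epi-converges to `f`,
`inf f < ∞`, `εν → 0` with `εν ≥ 0`, each `xν` is an `εν`-minimizer of `fν`, and
`xν → x` along a subsequence `N`, then `x` minimizes `f` and `fν(xν) → inf f`
along `N`. -/
theorem stmt13 {n : ℕ} (f : (Fin n → ℝ) → EReal) (fν : ℕ → (Fin n → ℝ) → EReal)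
    (hliminf : ∀ (xs : ℕ → (Fin n → ℝ)) (x : Fin n → ℝ),
      Tendsto xs atTop (𝓝 x) → f x ≤ liminf (fun ν => fν ν (xs ν)) atTop)
    (hlimsup : ∀ x : Fin n → ℝ, ∃ xs : ℕ → (Fin n → ℝ),
      Tendsto xs atTop (𝓝 x) ∧ limsup (fun ν => fν ν (xs ν)) atTop ≤ f x)
    (hinf : (⨅ x, f x) < ⊤)
    (ε : ℕ → ℝ) (hεnn : ∀ ν, 0 ≤ ε ν) (hε : Tendsto ε atTop (𝓝 0))
    (xs : ℕ → (Fin n → ℝ))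
    (hmin : ∀ ν, fν ν (xs ν) < ⊤ ∧ fν ν (xs ν) ≤ (⨅ x, fν ν x) + ((ε ν : ℝ) : EReal))
    (N : ℕ → ℕ) (hN : StrictMono N) (x : Fin n → ℝ)
    (hconv : Tendsto (fun k => xs (N k)) atTop (𝓝 x)) :
    (∀ x' : Fin n → ℝ, f x ≤ f x') ∧
    Tendsto (fun k => fν (N k) (xs (N k))) atTop (𝓝 (⨅ x', f x')) :=
  stmt13_general f fν hliminf hlimsup ε hε xs hmin N hN x hconv
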